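/- Let n ≥ 0 be an integer and let a, b, c be complex numbers such that c + m ≠ 0 for every integer m with 0 ≤ m ≤ n − 1. Then (a)^(n) · (b)^(n) / (c)^(n) = ∑_{k=0}^{n} (−1)^k · C(n, k) · (b + c + n − 1)^(k) · (b + c − a + k)^(n−k) · (c − a)^(k) / (c)^(k). -/

import Mathlib

/-- The rising factorial (Pochhammer symbol) `(y)^(k) = y(y+1)⋯(y+k-1)`. -/
noncomputable def risingFactorial (x : ℂ) (n : ℕ) : ℂ :=
  ∏ i ∈ Finset.range n, (x + i)

lemma rf_zero (x : ℂ) : risingFactorial x 0 = 1 :=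
  Finset.prod_range_zero _

lemma rf_succ (x : ℂ) (n : ℕ) :
    risingFactorial x (n + 1) = risingFactorial x n * (x + n) :=
  Finset.prod_range_succ _ _

lemma rf_succ' (x : ℂ) (n : ℕ) :
    risingFactorial x (n + 1) = x * risingFactorial (x + 1) n := by
  unfold risingFactorial
  rw [Finset.prod_range_succ']
  push_cast
  rw [add_zero, mul_comm]
  congr 1
  exact Finset.prod_congr rfl (fun i _ => by ring)

lemma rf_add (x : ℂ) (m l : ℕ) :
    risingFactorial x (m + l) = risingFactorial x m * risingFactorial (x + m) l := by
  unfold risingFactorial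
  rw [Finset.prod_range_add]
  congr 1
  exact Finset.prod_congr rfl (fun i _ => by push_cast; ring)

lemma rf_ne_zero {x : ℂ} {n : ℕ} (h : ∀ i : ℕ, i < n → x + i ≠ 0) :
    risingFactorial x n ≠ 0 := by
  unfold risingFactorial
  exact Finset.prod_ne_zero_iff.mpr (fun i hi => h i (Finset.mem_range.mp hi))

/-- The summand, multiplied through by `(c+k)^(n-k)` so that everything is polynomial. -/
noncomputable def Tm (a b c : ℂ) (n k : ℕ) : ℂ :=
  (-1) ^ k * (n.choose k : ℂ) * risingFactorial (b + c + n - 1) k *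
    risingFactorial (b + c - a + k) (n - k) * risingFactorial (c - a) k *
      risingFactorial (c + k) (n - k)

/-- The WZ certificate term. -/
noncomputable def Gm (a b c : ℂ) (n k : ℕ) : ℂ :=
  (b + c + 2 * n) * (-1) ^ k * (n.choose k : ℂ) * risingFactorial (b + c + n) k *
    risingFactorial (b + c - a + k) (n - k) * risingFactorial (c - a) k * (c - a + k) *
      risingFactorial (c + k) (n - k)

noncomputable def fm (a b c : ℂ) (n : ℕ) : ℕ → ℂ
  | 0 => 0
  | (k + 1) => Gm a b c n k

lemma step (a b c : ℂ) (n k : ℕ) (hk : k ≤ n + 1) :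
    Tm a b c (n + 1) k - (a + n) * (b + n) * Tm a b c n k
      = fm a b c n (k + 1) - fm a b c n k := by
  match k with
  | 0 =>
    simp only [Tm, Gm, fm, Nat.cast_zero, add_zero, Nat.choose_zero_right, Nat.cast_one,
      Nat.sub_zero, pow_zero, rf_zero, rf_succ]
    ring
  | (j + 1) =>
    rcases Nat.lt_or_ge j (n : ℕ) with hjn | hjn
    · -- generic case : j < n
      obtain ⟨m, rfl⟩ : ∃ m, n = j + 1 + m :=
        ⟨n - (j + 1), by omega⟩
      have h1 : j + 1 + m + 1 - (j + 1) = m + 1 := by omega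
      have h2 : j + 1 + m - (j + 1) = m := by omega
      have h3 : j + 1 + m - j = m + 1 := by omega
      simp only [Tm, Gm, fm, h1, h2, h3]
      rw [show b + c + ((j + 1 + m + 1 : ℕ) : ℂ) - 1 = b + c + ((j + 1 + m : ℕ) : ℂ) by
        push_cast; ring]
      rw [rf_succ (b + c + ((j + 1 + m : ℕ) : ℂ)) j]
      rw [rf_succ (b + c - a + ((j + 1 : ℕ) : ℂ)) m]
      rw [rf_succ (c - a) j]
      rw [rf_succ (c + ((j + 1 : ℕ) : ℂ)) m]
      rw [rf_succ' (b + c + ((j + 1 + m : ℕ) : ℂ) - 1) j]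
      rw [show b + c + ((j + 1 + m : ℕ) : ℂ) - 1 + 1 = b + c + ((j + 1 + m : ℕ) : ℂ) by ring]
      rw [rf_succ' (b + c - a + ((j : ℕ) : ℂ)) m]
      rw [show b + c - a + ((j : ℕ) : ℂ) + 1 = b + c - a + ((j + 1 : ℕ) : ℂ) by push_cast; ring]
      rw [rf_succ' (c + ((j : ℕ) : ℂ)) m]
      rw [show c + ((j : ℕ) : ℂ) + 1 = c + ((j + 1 : ℕ) : ℂ) by push_cast; ring]
      have hpascal : ((j + 1 + m + 1).choose (j + 1) : ℂ)
          = ((j + 1 + m).choose j : ℂ) + ((j + 1 + m).choose (j + 1) : ℂ) := by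
        rw [show j + 1 + m + 1 = (j + 1 + m) + 1 from rfl, Nat.choose_succ_succ]
        push_cast; ring
      have hy : ((j + 1 + m).choose (j + 1) : ℂ) * ((j : ℂ) + 1)
          = ((j + 1 + m).choose j : ℂ) * ((m : ℂ) + 1) := by
        have := Nat.choose_succ_right_eq (j + 1 + m) j
        have h4 : j + 1 + m - j = m + 1 := by omega
        rw [h4] at this
        exact_mod_cast congrArg (Nat.cast : ℕ → ℂ) this
      rw [hpascal]
      refine mul_left_cancel₀ (show ((j : ℂ) + 1) ≠ 0 from Nat.cast_add_one_ne_zero j) ?_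
      push_cast
      linear_combination
        ((-1) ^ (j + 1) * risingFactorial (b + c + ((j : ℂ) + 1 + (m : ℂ))) j *
          risingFactorial (b + c - a + ((j : ℂ) + 1)) m *
          risingFactorial (c + ((j : ℂ) + 1)) m * risingFactorial (c - a) j *
          (c - a + (j : ℂ)) *
          ((b + c + ((j : ℂ) + 1 + (m : ℂ)) - 1 + ((j : ℂ) + 1)) *
              (b + c - a + ((j : ℂ) + 1 + (m : ℂ))) * (c + ((j : ℂ) + 1 + (m : ℂ))) -
            (a + ((j : ℂ) + 1 + (m : ℂ))) * (b + ((j : ℂ) + 1 + (m : ℂ))) *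
              (b + c + ((j : ℂ) + 1 + (m : ℂ)) - 1) -
            (b + c + 2 * ((j : ℂ) + 1 + (m : ℂ))) *
              (b + c + ((j : ℂ) + 1 + (m : ℂ)) - 1 + ((j : ℂ) + 1)) *
              (c - a + ((j : ℂ) + 1)))) * hy
    · -- top case : k = n + 1
      have hjn' : j = n := by omega
      subst hjn'
      have h1 : j + 1 - (j + 1) = 0 := by omega
      have h2 : j - (j + 1) = 0 := by omega
      simp only [Tm, Gm, fm, h1, h2, Nat.sub_self, rf_zero, Nat.choose_succ_self,
        Nat.cast_zero, Nat.choose_self, Nat.cast_one]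
      rw [show b + c + ((j + 1 : ℕ) : ℂ) - 1 = b + c + ((j : ℕ) : ℂ) by push_cast; ring]
      rw [rf_succ (b + c + ((j : ℕ) : ℂ)) j]
      rw [rf_succ (c - a) j]
      push_cast
      ring

lemma sum_Tm (a b c : ℂ) (n : ℕ) :
    ∑ k ∈ Finset.range (n + 1), Tm a b c n k
      = risingFactorial a n * risingFactorial b n := by
  induction n with
  | zero =>
    simp [Tm, rf_zero]
  | succ n ih =>
    have hzero : Tm a b c n (n + 1) = 0 := by
      simp [Tm, Nat.choose_succ_self]
    have htel : ∑ k ∈ Finset.range (n + 2),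
        (Tm a b c (n + 1) k - (a + n) * (b + n) * Tm a b c n k) = 0 := by
      have : ∀ k ∈ Finset.range (n + 2),
          Tm a b c (n + 1) k - (a + n) * (b + n) * Tm a b c n k
            = fm a b c n (k + 1) - fm a b c n k := by
        intro k hk
        exact step a b c n k (by simpa using Nat.lt_succ_iff.mp (Finset.mem_range.mp hk))
      rw [Finset.sum_congr rfl this, Finset.sum_range_sub (fm a b c n)]
      have : fm a b c n (n + 2) = 0 := by
        simp [fm, Gm, Nat.choose_succ_self]
      rw [this]
      simp [fm]
    rw [Finset.sum_sub_distrib] at htel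
    have hsum : ∑ k ∈ Finset.range (n + 2), Tm a b c n k
        = ∑ k ∈ Finset.range (n + 1), Tm a b c n k := by
      rw [Finset.sum_range_succ, hzero, add_zero]
    rw [← Finset.mul_sum, hsum, ih, sub_eq_zero] at htel
    rw [htel, rf_succ a n, rf_succ b n]
    ring

theorem stmt_9 (n : ℕ) (a b c : ℂ) (h : ∀ m : ℕ, m < n → c + m ≠ 0) :
    risingFactorial a n * risingFactorial b n / risingFactorial c n =
      ∑ k ∈ Finset.range (n + 1),
        (-1) ^ k * (n.choose k : ℂ) * risingFactorial (b + c + n - 1) k *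
          risingFactorial (b + c - a + k) (n - k) * risingFactorial (c - a) k /
            risingFactorial c k := by
  rw [← sum_Tm a b c n, Finset.sum_div]
  refine Finset.sum_congr rfl (fun k hk => ?_)
  have hkn : k ≤ n := Nat.lt_succ_iff.mp (Finset.mem_range.mp hk)
  have hck : risingFactorial c k ≠ 0 :=
    rf_ne_zero (fun i hi => h i (lt_of_lt_of_le hi hkn))
  have hck2 : risingFactorial (c + k) (n - k) ≠ 0 := by
    refine rf_ne_zero (fun i hi => ?_)
    have : c + (k : ℂ) + (i : ℂ) = c + ((k + i : ℕ) : ℂ) := by push_cast; ring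
    rw [this]
    exact h (k + i) (by omega)
  have hcn : risingFactorial c n ≠ 0 := rf_ne_zero (fun i hi => h i hi)
  rw [div_eq_div_iff hcn hck]
  have hdecomp : risingFactorial c n
      = risingFactorial c k * risingFactorial (c + k) (n - k) := by
    conv_lhs => rw [show n = k + (n - k) by omega]
    exact rf_add c k (n - k)
  rw [hdecomp, Tm]
  ring
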